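/- Decidability of E: validity in the class of all preference models is decidable, i.e., there exists a computable function f from formulas of the language of E to Booleans such that f(φ) = true if and only if φ is valid in the class of all preference models. -/

import Mathlib

/-- Formulas of Åqvist's dyadic deontic logic **E**:
`φ ::= p | ¬φ | φ∧φ | □φ | ○(φ/φ)`.
`EForm.ob ψ φ` denotes `○(ψ/φ)` ("ψ is obligatory, given φ"). -/
inductive EForm : Type where
  | atom : ℕ → EForm
  | neg  : EForm → EForm
  | conj : EForm → EForm → EForm
  | box  : EForm → EForm
  | ob   : EForm → EForm → EForm
deriving DecidableEq

/-- Material implication, defined classically. -/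
def EForm.impl (φ ψ : EForm) : EForm := .neg (.conj φ (.neg ψ))

/-- Biconditional. -/
def EForm.iff' (φ ψ : EForm) : EForm := .conj (φ.impl ψ) (ψ.impl φ)

/-- A preference model `M = (W, ≽, V)`: a nonempty set of worlds, a betterness
relation, and a valuation. -/
structure PrefModel where
  W : Type
  ne : Nonempty W
  R : W → W → Prop
  V : ℕ → W → Prop

/-- Satisfaction `M,s ⊨ φ`. In particular
`M,s ⊨ ○(ψ/φ)` iff `opt_≽(‖φ‖) ⊆ ‖ψ‖`, where
`opt_≽(‖φ‖) = {w ∈ ‖φ‖ : ∀ y, (M,y ⊨ φ) → w ≽ y}`. -/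
def PrefModel.sat (M : PrefModel) : M.W → EForm → Prop
  | s, .atom n   => M.V n s
  | s, .neg φ    => ¬ PrefModel.sat M s φ
  | s, .conj φ ψ => PrefModel.sat M s φ ∧ PrefModel.sat M s ψ
  | _, .box φ    => ∀ t, PrefModel.sat M t φ
  | _, .ob ψ φ   => ∀ w, (PrefModel.sat M w φ ∧ ∀ y, PrefModel.sat M y φ → M.R w y) →
                     PrefModel.sat M w ψ

/-- Validity in the class of all preference models. -/
def EValid (φ : EForm) : Prop := ∀ (M : PrefModel) (s : M.W), M.sat s φ

/-- An explicit Gödel numbering of the formulas of E (using Cantor pairing);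
it is injective, so it identifies formulas with their codes. -/
def encE : EForm → ℕ
  | .atom n   => Nat.pair 0 n
  | .neg φ    => Nat.pair 1 (encE φ)
  | .conj φ ψ => Nat.pair 2 (Nat.pair (encE φ) (encE ψ))
  | .box φ    => Nat.pair 3 (encE φ)
  | .ob ψ φ   => Nat.pair 4 (Nat.pair (encE ψ) (encE φ))

/-!
Since `□` and `○` are global modalities, a preference model is described, as far as the
subformulas of a formula `ψ` are concerned, by the list `S` of valuations realized by its worlds
and the list `G` of its true modal subformulas. In a quasi-model the `□`-formulas in `G` are those true throughout
`S`, and every false `○(χ/φ)` has a witness valuation in `S` satisfying `φ ∧ ¬χ` which may be made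
optimal among the `φ`-worlds without falsifying a true `○(χ'/φ')`. A model yields a quasi-model,
and conversely a quasi-model yields a model: one world per valuation in `S`, better than no world,
and one world per witness, better than exactly the worlds satisfying its condition. Quasi-models
range over sublists of the codes of subformulas, so satisfiability is primitive recursive in the
code, and `φ` is valid iff `¬φ` is not satisfiable.
-/

theorem encE_injective : Function.Injective encE := by
  intro x y h
  induction x generalizing y <;> cases y <;> simp only [encE, Nat.pair_eq_pair] at h <;> grind

namespace EForm

@[simp]
def subformulas : EForm → List EForm
  | atom a => [atom a]
  | neg φ => neg φ :: φ.subformulas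
  | conj φ ψ => conj φ ψ :: (φ.subformulas ++ ψ.subformulas)
  | box φ => box φ :: φ.subformulas
  | ob ψ φ => ob ψ φ :: (ψ.subformulas ++ φ.subformulas)

@[simp]
theorem mem_subformulas_self (φ : EForm) : φ ∈ φ.subformulas := by
  cases φ <;> simp

theorem subformulas_subset_of_mem {φ ψ : EForm} (h : φ ∈ ψ.subformulas) :
    φ.subformulas ⊆ ψ.subformulas := by
  induction ψ <;> simp only [subformulas, List.mem_cons, List.mem_append] at h <;>
    grind [subformulas, mem_subformulas_self]

end EForm

section Primrec

open Primrec

variable {α β : Type} [Primcodable α] [Primcodable β]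

theorem PrimrecPred.imp {p q : α → Prop} (hp : PrimrecPred p) (hq : PrimrecPred q) :
    PrimrecPred fun a => p a → q a :=
  (hp.not.or hq).of_eq fun _ => imp_iff_not_or.symm

theorem PrimrecPred.iff {p q : α → Prop} (hp : PrimrecPred p) (hq : PrimrecPred q) :
    PrimrecPred fun a => (p a ↔ q a) :=
  ((hp.imp hq).and (hq.imp hp)).of_eq fun _ => iff_def.symm

theorem PrimrecPred.forall_mem {f : α → List β} {p : α → β → Prop} (hf : Primrec f)
    (hp : PrimrecRel p) : PrimrecPred fun a => ∀ b ∈ f a, p a b :=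
  hp.swap.forall_mem_list.comp hf .id

theorem PrimrecPred.exists_mem {f : α → List β} {p : α → β → Prop} (hf : Primrec f)
    (hp : PrimrecRel p) : PrimrecPred fun a => ∃ b ∈ f a, p a b :=
  hp.swap.exists_mem_list.comp hf .id

theorem PrimrecPred.unpair_fst_eq {f : α → ℕ} (hf : Primrec f) (k : ℕ) :
    PrimrecPred fun a => (f a).unpair.1 = k :=
  Primrec.eq.comp (fst.comp (unpair.comp hf)) (const k)

theorem PrimrecRel.mem_list [DecidableEq α] : PrimrecRel fun (a : α) (l : List α) => a ∈ l :=
  (Primrec.eq.exists_mem_list.of_eq fun _ _ => by simp).swap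

theorem Primrec.list_sublists : Primrec (@List.sublists α) := by
  have step : Primrec₂ fun (_ : List α) (p : α × List (List α)) =>
      p.2.flatMap fun x => [x, p.1 :: x] :=
    (list_flatMap (snd.comp snd) (list_cons.comp snd
      (list_cons.comp (list_cons.comp (fst.comp (snd.comp fst)) snd) (const []))).to₂).to₂
  exact (list_foldr .id (const [[]]) step).of_eq fun _ => rfl

end Primrec

theorem Nat.unpair_snd_lt {n : ℕ} (h : n.unpair.1 ≠ 0) : n.unpair.2 < n := by
  have := Nat.unpair_add_le n
  omega

/-- Codes with tag `1` (`¬`) or `3` (`□`) are unary nodes, codes with tag `2` (`∧`) or `4` (`○`)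
binary nodes, and all other codes (among them the atoms, tag `0`) leaves. -/
def foldCode {α : Type} (leaf : ℕ → α) (unary : ℕ → α → α) (binary : ℕ → α → α → α)
    (n : ℕ) : α :=
  if n.unpair.1 = 1 ∨ n.unpair.1 = 3 then unary n (foldCode leaf unary binary n.unpair.2)
  else if n.unpair.1 = 2 ∨ n.unpair.1 = 4 then
    binary n (foldCode leaf unary binary n.unpair.2.unpair.1)
      (foldCode leaf unary binary n.unpair.2.unpair.2)
  else leaf n
termination_by n
decreasing_by
  all_goals first
    | exact Nat.unpair_snd_lt (by omega)
    | exact (Nat.unpair_left_le _).trans_lt (Nat.unpair_snd_lt (by omega))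
    | exact (Nat.unpair_right_le _).trans_lt (Nat.unpair_snd_lt (by omega))

def foldCodeStep {α : Type} [Inhabited α] (leaf : ℕ → α) (unary : ℕ → α → α)
    (binary : ℕ → α → α → α) (l : List α) : α :=
  let n := l.length
  if n.unpair.1 = 1 ∨ n.unpair.1 = 3 then unary n (l.getI n.unpair.2)
  else if n.unpair.1 = 2 ∨ n.unpair.1 = 4 then
    binary n (l.getI n.unpair.2.unpair.1) (l.getI n.unpair.2.unpair.2)
  else leaf n

theorem foldCodeStep_map_range {α : Type} [Inhabited α] (leaf : ℕ → α) (unary : ℕ → α → α)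
    (binary : ℕ → α → α → α) (n : ℕ) :
    foldCodeStep leaf unary binary ((List.range n).map (foldCode leaf unary binary)) =
      foldCode leaf unary binary n := by
  have getI_eq {i : ℕ} (h : i < n) :
      ((List.range n).map (foldCode leaf unary binary)).getI i = foldCode leaf unary binary i := by
    rw [List.getI_eq_getElem _ (by simpa using h)]
    simp
  rw [foldCode, foldCodeStep]
  simp only [List.length_map, List.length_range]
  split_ifs with h₁ h₂
  · rw [getI_eq (Nat.unpair_snd_lt (by omega))]
  · rw [getI_eq ((Nat.unpair_left_le _).trans_lt (Nat.unpair_snd_lt (by omega))),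
      getI_eq ((Nat.unpair_right_le _).trans_lt (Nat.unpair_snd_lt (by omega)))]
  · rfl

theorem Primrec.foldCode {σ α : Type} [Primcodable σ] [Primcodable α] [Inhabited α]
    {leaf : σ → ℕ → α} {unary : σ → ℕ → α → α} {binary : σ → ℕ → α → α → α}
    (hleaf : Primrec₂ leaf) (hunary : Primrec₂ fun c (p : ℕ × α) => unary c p.1 p.2)
    (hbinary : Primrec₂ fun c (p : ℕ × α × α) => binary c p.1 p.2.1 p.2.2) :
    Primrec₂ fun c => _root_.foldCode (leaf c) (unary c) (binary c) := by
  have len : Primrec fun x : σ × List α => x.2.length := list_length.comp snd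
  have arg : Primrec fun x : σ × List α => x.2.length.unpair.2 := snd.comp (unpair.comp len)
  have get {k : σ × List α → ℕ} (hk : Primrec k) : Primrec fun x : σ × List α => x.2.getI (k x) :=
    list_getI.comp snd hk
  have hstep : Primrec₂ fun c l => some (foldCodeStep (leaf c) (unary c) (binary c) l) :=
    option_some.comp <|
      Primrec.ite ((PrimrecPred.unpair_fst_eq len 1).or (PrimrecPred.unpair_fst_eq len 3))
        (hunary.comp fst (pair len (get arg))) <|
      Primrec.ite ((PrimrecPred.unpair_fst_eq len 2).or (PrimrecPred.unpair_fst_eq len 4))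
        (hbinary.comp fst (pair len (pair (get (fst.comp (unpair.comp arg)))
          (get (snd.comp (unpair.comp arg)))))) (hleaf.comp fst len)
  exact nat_strong_rec _ hstep fun c n => congrArg some (foldCodeStep_map_range _ _ _ n)

def subformulaCodes : ℕ → List ℕ :=
  foldCode (fun n => [n]) (fun n l => n :: l) (fun n l l' => n :: (l ++ l'))

theorem subformulaCodes_encE (φ : EForm) :
    subformulaCodes (encE φ) = φ.subformulas.map encE := by
  induction φ <;> rw [subformulaCodes, foldCode] <;> simp_all [encE, subformulaCodes]

theorem exists_of_mem_subformulaCodes {ψ : EForm} {c : ℕ} (hc : c ∈ subformulaCodes (encE ψ)) :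
    ∃ χ ∈ ψ.subformulas, encE χ = c := by
  simpa [subformulaCodes_encE] using hc

/-- Atoms are looked up in `v`, and `□`/`○`-codes, whose truth does not depend on the world,
in `G`. -/
def evalCode (v G : List ℕ) : ℕ → Bool :=
  foldCode (fun n => n ∈ v) (fun n b => if n.unpair.1 = 1 then !b else n ∈ G)
    (fun n b b' => if n.unpair.1 = 2 then b && b' else n ∈ G)

section evalCode

variable (v G : List ℕ)

@[simp]
theorem evalCode_atom (a : ℕ) :
    evalCode v G (encE (.atom a)) = decide (encE (.atom a) ∈ v) := by
  rw [evalCode, foldCode]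
  simp [encE]

@[simp]
theorem evalCode_neg (φ : EForm) : evalCode v G (encE (.neg φ)) = !evalCode v G (encE φ) := by
  rw [evalCode, foldCode]
  simp [encE]

@[simp]
theorem evalCode_conj (φ ψ : EForm) :
    evalCode v G (encE (.conj φ ψ)) = (evalCode v G (encE φ) && evalCode v G (encE ψ)) := by
  rw [evalCode, foldCode]
  simp [encE]

@[simp]
theorem evalCode_box (φ : EForm) :
    evalCode v G (encE (.box φ)) = decide (encE (.box φ) ∈ G) := by
  rw [evalCode, foldCode]
  simp [encE]

@[simp]
theorem evalCode_ob (ψ φ : EForm) :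
    evalCode v G (encE (.ob ψ φ)) = decide (encE (.ob ψ φ) ∈ G) := by
  rw [evalCode, foldCode]
  simp [encE]

end evalCode

@[simp]
theorem unpair_encE_box (φ : EForm) : (encE (.box φ)).unpair = (3, encE φ) :=
  Nat.unpair_pair _ _

def obBody (c : ℕ) : ℕ := c.unpair.2.unpair.1

def obCond (c : ℕ) : ℕ := c.unpair.2.unpair.2

@[simp]
theorem obBody_encE (χ φ : EForm) : obBody (encE (.ob χ φ)) = encE χ := by
  simp [obBody, encE]

@[simp]
theorem obCond_encE (χ φ : EForm) : obCond (encE (.ob χ φ)) = encE φ := by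
  simp [obCond, encE]

/-- `v` may serve as an optimal world for the condition of the false `○`-code `c`: since it is then
better than every world satisfying that condition, it is also optimal for every condition `φ'`
implied by it, so it must satisfy `χ'` for each true `○(χ'/φ')` of that kind. -/
def IsWitness (L : List ℕ) (S : List (List ℕ)) (G : List ℕ) (c : ℕ) (v : List ℕ) : Prop :=
  evalCode v G (obCond c) ∧ ¬ evalCode v G (obBody c) ∧
    ∀ d ∈ L, d.unpair.1 = 4 → d ∈ G →
      (∀ u ∈ S, evalCode u G (obCond d) → evalCode u G (obCond c)) →
      evalCode v G (obCond d) → evalCode v G (obBody d)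

def IsQuasiModel (L : List ℕ) (S : List (List ℕ)) (G : List ℕ) : Prop :=
  (∀ c ∈ L, c.unpair.1 = 3 → (c ∈ G ↔ ∀ v ∈ S, evalCode v G c.unpair.2)) ∧
    ∀ c ∈ L, c.unpair.1 = 4 → c ∉ G → ∃ v ∈ S, IsWitness L S G c v

def SatCode (n : ℕ) : Prop :=
  ∃ S ∈ (subformulaCodes n).sublists.sublists, ∃ G ∈ (subformulaCodes n).sublists,
    IsQuasiModel (subformulaCodes n) S G ∧ ∃ v ∈ S, evalCode v G n

def PrefModel.IsOptimal (M : PrefModel) (φ : EForm) (w : M.W) : Prop :=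
  M.sat w φ ∧ ∀ y, M.sat y φ → M.R w y

theorem evalCode_iff_sat (M : PrefModel) (val : M.W → List ℕ) (G : List ℕ) {ψ : EForm}
    (hatom : ∀ a, .atom a ∈ ψ.subformulas → ∀ s, encE (.atom a) ∈ val s ↔ M.V a s)
    (hbox : ∀ φ, .box φ ∈ ψ.subformulas → (∀ s, evalCode (val s) G (encE φ) ↔ M.sat s φ) →
      (encE (.box φ) ∈ G ↔ ∀ t, M.sat t φ))
    (hob : ∀ χ φ, .ob χ φ ∈ ψ.subformulas → (∀ s, evalCode (val s) G (encE χ) ↔ M.sat s χ) →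
      (∀ s, evalCode (val s) G (encE φ) ↔ M.sat s φ) →
      (encE (.ob χ φ) ∈ G ↔ ∀ w, M.IsOptimal φ w → M.sat w χ)) :
    ∀ χ ∈ ψ.subformulas, ∀ s, evalCode (val s) G (encE χ) ↔ M.sat s χ := by
  intro χ hχ
  induction χ with
  | atom a => simpa [PrefModel.sat] using hatom a hχ
  | neg φ ih =>
    simp [PrefModel.sat, ← ih (EForm.subformulas_subset_of_mem hχ (by simp))]
  | conj φ χ ihφ ihχ =>
    simp [PrefModel.sat, ← ihφ (EForm.subformulas_subset_of_mem hχ (by simp)),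
      ← ihχ (EForm.subformulas_subset_of_mem hχ (by simp))]
  | box φ ih =>
    intro s
    simpa [PrefModel.sat] using hbox φ hχ (ih (EForm.subformulas_subset_of_mem hχ (by simp)))
  | ob χ φ ihχ ihφ =>
    intro s
    simpa [PrefModel.sat, PrefModel.IsOptimal] using
      hob χ φ hχ (ihχ (EForm.subformulas_subset_of_mem hχ (by simp)))
        (ihφ (EForm.subformulas_subset_of_mem hχ (by simp)))

namespace PrefModel

variable (M : PrefModel) (ψ : EForm)

open Classical in
noncomputable def trueCodes (s : M.W) : List ℕ :=
  (ψ.subformulas.filter (M.sat s ·)).map encE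

open Classical in
noncomputable def validCodes : List ℕ :=
  (ψ.subformulas.filter fun χ => ∀ s, M.sat s χ).map encE

open Classical in
noncomputable def realizedValuations : List (List ℕ) :=
  (subformulaCodes (encE ψ)).sublists.filter fun v => ∃ s, v = M.trueCodes ψ s

variable {M ψ}

theorem mem_trueCodes {χ : EForm} (hχ : χ ∈ ψ.subformulas) (s : M.W) :
    encE χ ∈ M.trueCodes ψ s ↔ M.sat s χ := by
  simp [trueCodes, List.mem_map_of_injective encE_injective, hχ]

theorem mem_validCodes {χ : EForm} (hχ : χ ∈ ψ.subformulas) :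
    encE χ ∈ M.validCodes ψ ↔ ∀ s, M.sat s χ := by
  simp [validCodes, List.mem_map_of_injective encE_injective, hχ]

theorem mem_realizedValuations {v : List ℕ} :
    v ∈ M.realizedValuations ψ ↔ ∃ s, v = M.trueCodes ψ s := by
  simp only [realizedValuations, List.mem_filter, List.mem_sublists, decide_eq_true_eq,
    and_iff_right_iff_imp, forall_exists_index]
  rintro s rfl
  rw [subformulaCodes_encE]
  exact List.filter_sublist.map _

theorem forall_mem_realizedValuations_iff {P : List ℕ → Prop} :
    (∀ v ∈ M.realizedValuations ψ, P v) ↔ ∀ s, P (M.trueCodes ψ s) := by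
  simp [mem_realizedValuations]

theorem evalCode_trueCodes_iff {χ : EForm} (hχ : χ ∈ ψ.subformulas) (s : M.W) :
    evalCode (M.trueCodes ψ s) (M.validCodes ψ) (encE χ) ↔ M.sat s χ := by
  have := M.ne
  refine evalCode_iff_sat M (M.trueCodes ψ) (M.validCodes ψ) (fun a ha s => mem_trueCodes ha s)
    (fun φ hφ _ => ?_) (fun χ φ hχφ _ _ => ?_) χ hχ s
  · simp [mem_validCodes hφ, PrefModel.sat]
  · simp [mem_validCodes hχφ, PrefModel.sat, IsOptimal]

theorem isWitness_trueCodes {χ φ : EForm} (hob : .ob χ φ ∈ ψ.subformulas) {w : M.W}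
    (hw : M.IsOptimal φ w) (hχ : ¬ M.sat w χ) :
    IsWitness (subformulaCodes (encE ψ)) (M.realizedValuations ψ) (M.validCodes ψ)
      (encE (.ob χ φ)) (M.trueCodes ψ w) := by
  have hχψ : χ ∈ ψ.subformulas := EForm.subformulas_subset_of_mem hob (by simp)
  have hφψ : φ ∈ ψ.subformulas := EForm.subformulas_subset_of_mem hob (by simp)
  refine ⟨?_, ?_, fun d hdL htag hdG hincl hφ' => ?_⟩
  · simpa [evalCode_trueCodes_iff hφψ] using hw.1
  · simpa [evalCode_trueCodes_iff hχψ] using hχ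
  obtain ⟨_ | _ | _ | _ | ⟨χ', φ'⟩, hd, rfl⟩ := exists_of_mem_subformulaCodes hdL <;>
    simp [encE] at htag
  have hχ'ψ : χ' ∈ ψ.subformulas := EForm.subformulas_subset_of_mem hd (by simp)
  have hφ'ψ : φ' ∈ ψ.subformulas := EForm.subformulas_subset_of_mem hd (by simp)
  simp only [obBody_encE, obCond_encE, evalCode_trueCodes_iff hχ'ψ, evalCode_trueCodes_iff hφ'ψ,
    evalCode_trueCodes_iff hφψ, forall_mem_realizedValuations_iff] at hincl hφ' ⊢
  rw [mem_validCodes hd] at hdG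
  exact hdG w w ⟨hφ', fun y hy => hw.2 y (hincl y hy)⟩

theorem isQuasiModel_realizedValuations :
    IsQuasiModel (subformulaCodes (encE ψ)) (M.realizedValuations ψ) (M.validCodes ψ) := by
  have := M.ne
  constructor
  · intro c hc htag
    obtain ⟨_ | _ | _ | φ | _, hbox, rfl⟩ := exists_of_mem_subformulaCodes hc <;>
      simp [encE] at htag
    have hφψ : φ ∈ ψ.subformulas := EForm.subformulas_subset_of_mem hbox (by simp)
    simp [mem_validCodes hbox, forall_mem_realizedValuations_iff, evalCode_trueCodes_iff hφψ,
      PrefModel.sat]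
  · intro c hc htag hcG
    obtain ⟨_ | _ | _ | _ | ⟨χ, φ⟩, hob, rfl⟩ := exists_of_mem_subformulaCodes hc <;>
      simp [encE] at htag
    simp only [mem_validCodes hob, PrefModel.sat, not_forall] at hcG
    obtain ⟨-, w, hw, hχ⟩ := hcG
    exact ⟨_, mem_realizedValuations.2 ⟨w, rfl⟩, isWitness_trueCodes hob hw hχ⟩

theorem satCode_of_sat {s : M.W} (h : M.sat s ψ) : SatCode (encE ψ) := by
  refine ⟨M.realizedValuations ψ, ?_, M.validCodes ψ, ?_, isQuasiModel_realizedValuations,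
    M.trueCodes ψ s, mem_realizedValuations.2 ⟨s, rfl⟩,
    (evalCode_trueCodes_iff (EForm.mem_subformulas_self ψ) s).2 h⟩
  · exact List.mem_sublists.2 List.filter_sublist
  · rw [List.mem_sublists, subformulaCodes_encE]
    exact List.filter_sublist.map _

end PrefModel

namespace IsQuasiModel

variable {L : List ℕ} {S : List (List ℕ)} {G : List ℕ}

def World (L : List ℕ) (S : List (List ℕ)) (G : List ℕ) : Type :=
  {v // v ∈ S} ⊕ {d : ℕ × List ℕ // d.2 ∈ S ∧ IsWitness L S G d.1 d.2}

def World.val : World L S G → List ℕ :=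
  Sum.elim Subtype.val fun d => d.1.2

@[simp]
theorem World.val_inl (v : {v // v ∈ S}) : World.val (.inl v : World L S G) = v.1 := rfl

@[simp]
theorem World.val_inr (d : {d : ℕ × List ℕ // d.2 ∈ S ∧ IsWitness L S G d.1 d.2}) :
    World.val (.inr d : World L S G) = d.1.2 := rfl

theorem World.val_mem (w : World L S G) : w.val ∈ S := by
  rcases w with ⟨v, hv⟩ | ⟨d, hd, -⟩
  exacts [hv, hd]

theorem forall_mem_iff_forall_world {P : List ℕ → Prop} :
    (∀ v ∈ S, P v) ↔ ∀ w : World L S G, P w.val :=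
  ⟨fun h w => h _ w.val_mem, fun h v hv => h (.inl ⟨v, hv⟩)⟩

def model (L : List ℕ) (S : List (List ℕ)) (G : List ℕ) (hS : S ≠ []) : PrefModel where
  W := World L S G
  ne := ⟨.inl ⟨S.head hS, S.head_mem hS⟩⟩
  R := Sum.elim (fun _ _ => False) fun d t => evalCode t.val G (obCond d.1.1)
  V a w := encE (.atom a) ∈ w.val

theorem model_sat_iff (hQ : IsQuasiModel L S G) (hS : S ≠ []) {ψ : EForm}
    (hL : ∀ χ ∈ ψ.subformulas, encE χ ∈ L) :
    ∀ χ ∈ ψ.subformulas, ∀ w : (model L S G hS).W,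
      evalCode w.val G (encE χ) ↔ (model L S G hS).sat w χ := by
  refine evalCode_iff_sat _ _ G (fun a _ w => Iff.rfl) (fun φ hbox ih => ?_)
    (fun χ φ hob ihχ ihφ => ?_)
  · rw [hQ.1 _ (hL _ hbox) (by simp), unpair_encE_box, forall_mem_iff_forall_world]
    exact forall_congr' ih
  by_cases hc : encE (.ob χ φ) ∈ G
  · simp only [hc, true_iff]
    rintro (⟨v, hv⟩ | ⟨⟨c, v⟩, hvS, hwit⟩) ⟨hφw, hdom⟩
    · exact (hdom _ hφw).elim
    refine (ihχ _).1 ?_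
    simpa using hwit.2.2 _ (hL _ hob) (by simp [encE]) hc
      (fun u hu hφu => hdom (.inl ⟨u, hu⟩) ((ihφ _).1 (by simpa using hφu)))
      (by simpa using (ihφ _).2 hφw)
  · simp only [hc, false_iff, not_forall]
    obtain ⟨v, hvS, hwit⟩ := hQ.2 _ (hL _ hob) (by simp [encE]) hc
    refine ⟨.inr ⟨(encE (.ob χ φ), v), hvS, hwit⟩,
      ⟨(ihφ _).1 (by simpa using hwit.1), fun y hy => ?_⟩,
      fun h => hwit.2.1 (by simpa using (ihχ _).2 h)⟩
    show evalCode y.val G (obCond (encE (.ob χ φ)))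
    simpa using (ihφ y).2 hy

end IsQuasiModel

theorem satCode_encE_iff (ψ : EForm) :
    SatCode (encE ψ) ↔ ∃ (M : PrefModel) (s : M.W), M.sat s ψ := by
  refine ⟨fun ⟨S, _, G, _, hQ, v, hv, hψ⟩ => ?_, fun ⟨M, s, h⟩ => PrefModel.satCode_of_sat h⟩
  have hS : S ≠ [] := List.ne_nil_of_mem hv
  have hL : ∀ χ ∈ ψ.subformulas, encE χ ∈ subformulaCodes (encE ψ) := fun χ hχ =>
    subformulaCodes_encE ψ ▸ List.mem_map_of_mem hχ
  exact ⟨IsQuasiModel.model _ S G hS, .inl ⟨v, hv⟩,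
    (hQ.model_sat_iff hS hL ψ (EForm.mem_subformulas_self ψ) _).1 hψ⟩

section Primrec

open Primrec

variable {α : Type} [Primcodable α]

theorem primrec_subformulaCodes : Primrec subformulaCodes :=
  ((Primrec.foldCode (σ := Unit) (leaf := fun _ n => [n]) (unary := fun _ => List.cons)
    (binary := fun _ n l l' => n :: (l ++ l')) (list_cons.comp snd (const [])).to₂
    (list_cons.comp (fst.comp snd) (snd.comp snd)).to₂
    (list_cons.comp (fst.comp snd)
      (list_append.comp (fst.comp (snd.comp snd)) (snd.comp (snd.comp snd)))).to₂).comp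
    (const ()) .id).of_eq fun _ => rfl

theorem primrec_evalCode : Primrec₂ fun (vG : List ℕ × List ℕ) n => evalCode vG.1 vG.2 n :=
  Primrec.foldCode (PrimrecRel.mem_list.comp snd (fst.comp fst)).decide.to₂
    (Primrec.ite (PrimrecPred.unpair_fst_eq (fst.comp snd) 1) (Primrec.not.comp (snd.comp snd))
      (PrimrecRel.mem_list.comp (fst.comp snd) (snd.comp fst)).decide).to₂
    (Primrec.ite (PrimrecPred.unpair_fst_eq (fst.comp snd) 2)
      (Primrec.and.comp (fst.comp (snd.comp snd)) (snd.comp (snd.comp snd)))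
      (PrimrecRel.mem_list.comp (fst.comp snd) (snd.comp fst)).decide).to₂

theorem primrecPred_evalCode {v G : α → List ℕ} {n : α → ℕ} (hv : Primrec v)
    (hG : Primrec G) (hn : Primrec n) : PrimrecPred fun a => evalCode (v a) (G a) (n a) = true :=
  Primrec.eq.comp (primrec_evalCode.comp (pair hv hG) hn) (const true)

theorem primrec_obBody : Primrec obBody := fst.comp (unpair.comp (snd.comp unpair))

theorem primrec_obCond : Primrec obCond := snd.comp (unpair.comp (snd.comp unpair))

theorem primrecPred_isWitness {L : α → List ℕ} {S : α → List (List ℕ)} {G : α → List ℕ}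
    {c : α → ℕ} {v : α → List ℕ} (hL : Primrec L) (hS : Primrec S) (hG : Primrec G)
    (hc : Primrec c) (hv : Primrec v) :
    PrimrecPred fun a => IsWitness (L a) (S a) (G a) (c a) (v a) := by
  have hincl : PrimrecRel fun (p : α × ℕ) u =>
      evalCode u (G p.1) (obCond p.2) = true → evalCode u (G p.1) (obCond (c p.1)) = true :=
    (primrecPred_evalCode snd (hG.comp (fst.comp fst)) (primrec_obCond.comp (snd.comp fst))).imp
      (primrecPred_evalCode snd (hG.comp (fst.comp fst))
        (primrec_obCond.comp (hc.comp (fst.comp fst))))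
  refine (primrecPred_evalCode hv hG (primrec_obCond.comp hc)).and <|
    (primrecPred_evalCode hv hG (primrec_obBody.comp hc)).not.and <| .forall_mem hL ?_
  exact (PrimrecPred.unpair_fst_eq snd 4).imp <|
    (PrimrecRel.mem_list.comp snd (hG.comp fst)).imp <|
    (PrimrecPred.forall_mem (hS.comp fst) hincl).imp <|
    (primrecPred_evalCode (hv.comp fst) (hG.comp fst) (primrec_obCond.comp snd)).imp
      (primrecPred_evalCode (hv.comp fst) (hG.comp fst) (primrec_obBody.comp snd))

theorem primrecPred_isQuasiModel :
    PrimrecPred fun x : List ℕ × List (List ℕ) × List ℕ => IsQuasiModel x.1 x.2.1 x.2.2 := by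
  have hS : Primrec fun y : (List ℕ × List (List ℕ) × List ℕ) × ℕ => y.1.2.1 :=
    fst.comp (snd.comp fst)
  have hG : Primrec fun y : (List ℕ × List (List ℕ) × List ℕ) × ℕ => y.1.2.2 :=
    snd.comp (snd.comp fst)
  refine (PrimrecPred.forall_mem fst ?_).and (PrimrecPred.forall_mem fst ?_)
  · exact (PrimrecPred.unpair_fst_eq snd 3).imp <| (PrimrecRel.mem_list.comp snd hG).iff <|
      PrimrecPred.forall_mem hS
        (primrecPred_evalCode snd (hG.comp fst) (snd.comp (unpair.comp (snd.comp fst))))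
  · exact (PrimrecPred.unpair_fst_eq snd 4).imp <| (PrimrecRel.mem_list.comp snd hG).not.imp <|
      PrimrecPred.exists_mem hS <|
        primrecPred_isWitness (fst.comp (fst.comp fst)) (hS.comp fst) (hG.comp fst)
          (snd.comp fst) snd

theorem primrecPred_satCode : PrimrecPred SatCode := by
  have hL : Primrec subformulaCodes := primrec_subformulaCodes
  have hQ : PrimrecRel fun (p : ℕ × List (List ℕ)) (G : List ℕ) =>
      IsQuasiModel (subformulaCodes p.1) p.2 G ∧ ∃ v ∈ p.2, evalCode v G p.1 = true :=
    (primrecPred_isQuasiModel.comp (pair (hL.comp (fst.comp fst)) (pair (snd.comp fst) snd))).and <|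
      PrimrecPred.exists_mem (snd.comp fst)
        (primrecPred_evalCode snd (snd.comp fst) (fst.comp (fst.comp fst)))
  exact PrimrecPred.exists_mem (list_sublists.comp (list_sublists.comp hL)) <|
    PrimrecPred.exists_mem (list_sublists.comp (hL.comp fst)) hQ

end Primrec

/-- **Decidability of E**: validity in the class of all preference models is
decidable, i.e. there is a computable function from (codes of) formulas to
Booleans returning `true` exactly on the valid formulas. -/
theorem E_decidable :
    Function.Injective encE ∧
    ∃ g : ℕ → Bool, Computable g ∧ ∀ φ : EForm, (g (encE φ) = true ↔ EValid φ) := by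
  obtain ⟨_, hdec⟩ := primrecPred_satCode
  refine ⟨encE_injective, fun n => !decide (SatCode (Nat.pair 1 n)),
    (Primrec.not.comp (hdec.comp (Primrec₂.natPair.comp (.const 1) .id))).to_comp, fun φ => ?_⟩
  have hneg : Nat.pair 1 (encE φ) = encE (.neg φ) := rfl
  simp [hneg, satCode_encE_iff, EValid, PrefModel.sat]
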